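/- For all real c₁, c₂ > 0, one has A(c₁,c₂)² = Li₂(1 − e^{−c₁}) + Li₂(1 − e^{−c₂}) − Li₂(1 − e^{−(c₁+c₂)}), and moreover A(c₁,c₂)² = π²/6 + Li₂(e^{−(c₁+c₂)}) − Li₂(e^{−c₁}) − Li₂(e^{−c₂}) − (c₁+c₂)·log(1 − e^{−(c₁+c₂)}) + c₁·log(1 − e^{−c₁}) + c₂·log(1 − e^{−c₂}). -/

import Mathlib

open scoped Real

/-- The dilogarithm `Li₂(x) = ∑_{k=1}^∞ x^k / k²`. -/
noncomputable def Li2 (x : ℝ) : ℝ := ∑' k : ℕ, x ^ (k + 1) / ((k : ℝ) + 1) ^ 2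

/-- `A(c₁,c₂) = sqrt(∫_0^{c₁} x/(eˣ−1) dx − ∫_{c₂}^{c₁+c₂} x/(eˣ−1) dx)`. -/
noncomputable def A (c₁ c₂ : ℝ) : ℝ :=
  Real.sqrt ((∫ x in (0 : ℝ)..c₁, x / (Real.exp x - 1)) -
    ∫ x in c₂..(c₁ + c₂), x / (Real.exp x - 1))

/-!
With `G(y) = Li₂(1 - e^{-y})` one has `G'(y) = y / (e^y - 1)`, because
`Li₂'(x) = -log(1 - x) / x`; so both integrals defining `A(c₁, c₂)²` are differences of
values of `G`, which gives the first identity. The radicand is nonnegative because `y / (e^y - 1)`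
is decreasing, so shifting the interval of integration to the right lowers the integral.

The second identity follows from Euler's reflection formula
`Li₂(x) + Li₂(1 - x) + log x · log(1 - x) = π²/6` at `x = e^{-c}`. Its left-hand side has
derivative zero on `(0, 1)` and is continuous at `0`, since
`log y · log(1 - y) = (y log y) · (log(1 - y) / y) → 0`.
-/

open Real Set MeasureTheory

lemma hasSum_one_div_succ_sq : HasSum (fun k : ℕ => 1 / ((k : ℝ) + 1) ^ 2) (π ^ 2 / 6) := by
  have h := (hasSum_nat_add_iff (f := fun n : ℕ => 1 / (n : ℝ) ^ 2) 1).mpr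
    (by simpa using hasSum_zeta_two)
  simpa only [Nat.cast_add_one] using h

lemma norm_pow_succ_div_succ_sq_le {x : ℝ} (hx : |x| ≤ 1) (k : ℕ) :
    ‖x ^ (k + 1) / ((k : ℝ) + 1) ^ 2‖ ≤ 1 / ((k : ℝ) + 1) ^ 2 := by
  rw [norm_div, norm_pow, norm_pow, norm_eq_abs, norm_eq_abs,
    abs_of_pos (by positivity : (0 : ℝ) < k + 1)]
  gcongr
  exact pow_le_one₀ (abs_nonneg x) hx

lemma Li2_zero : Li2 0 = 0 := by simp [Li2]

lemma Li2_one : Li2 1 = π ^ 2 / 6 := by simpa [Li2] using hasSum_one_div_succ_sq.tsum_eq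

lemma continuousOn_Li2 : ContinuousOn Li2 (Icc (-1) 1) :=
  continuousOn_tsum (fun _ => (continuous_pow _).continuousOn.div_const _)
    hasSum_one_div_succ_sq.summable fun k _ hx => norm_pow_succ_div_succ_sq_le (abs_le.mpr hx) k

lemma hasSum_pow_div_succ {x : ℝ} (hx0 : x ≠ 0) (hx : |x| < 1) :
    HasSum (fun k : ℕ => x ^ k / ((k : ℝ) + 1)) (-log (1 - x) / x) := by
  have h := (hasSum_pow_div_log_of_abs_lt_one hx).div_const x
  have hterm : (fun k : ℕ => x ^ (k + 1) / ((k : ℝ) + 1) / x) =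
      fun k : ℕ => x ^ k / ((k : ℝ) + 1) := by
    funext k
    rw [pow_succ']
    field_simp
  rwa [hterm] at h

lemma hasDerivAt_Li2 {x : ℝ} (hx0 : x ≠ 0) (hx : |x| < 1) :
    HasDerivAt Li2 (-log (1 - x) / x) x := by
  obtain ⟨r, hxr, hr1⟩ := exists_between hx
  have hr0 : 0 < r := (abs_nonneg x).trans_lt hxr
  rw [← (hasSum_pow_div_succ hx0 hx).tsum_eq]
  -- termwise differentiation on `(-r, r)`, the derivatives being dominated by `r ^ k`
  refine hasDerivAt_tsum_of_isPreconnected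
    (g := fun (k : ℕ) (y : ℝ) => y ^ (k + 1) / ((k : ℝ) + 1) ^ 2)
    (g' := fun (k : ℕ) (y : ℝ) => y ^ k / ((k : ℝ) + 1))
    (summable_geometric_of_lt_one hr0.le hr1) isOpen_Ioo isPreconnected_Ioo
    (fun k y _ => ?_) (fun k y hy => ?_) ⟨neg_lt_zero.mpr hr0, hr0⟩ ?_ (abs_lt.mp hxr)
  · refine ((hasDerivAt_pow (k + 1) y).div_const (((k : ℝ) + 1) ^ 2)).congr_deriv ?_
    rw [Nat.add_sub_cancel]
    push_cast
    field_simp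
  · have hyr : |y| ≤ r := (abs_lt.mpr hy).le
    rw [norm_div, norm_pow, norm_eq_abs, norm_eq_abs,
      abs_of_pos (by positivity : (0 : ℝ) < k + 1)]
    exact (div_le_self (by positivity) (by simp)).trans (pow_le_pow_left₀ (abs_nonneg y) hyr k)
  · simp

lemma log_mul_log_one_sub_eq_dslope (y : ℝ) :
    log y * log (1 - y) = y * log y * dslope (fun t => log (1 - t)) 0 y := by
  rcases eq_or_ne y 0 with rfl | hy
  · simp
  · rw [dslope_of_ne _ hy, slope_def_field]
    simp only [sub_zero, log_one]
    field_simp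

lemma continuousOn_log_mul_log_one_sub : ContinuousOn (fun y => log y * log (1 - y)) (Iio 1) := by
  intro y hy
  have hlog : ContinuousAt (fun t => log (1 - t)) y :=
    (continuousAt_log (sub_ne_zero.mpr (ne_of_gt hy))).comp (continuousAt_const.sub continuousAt_id)
  have hdslope : ContinuousAt (dslope (fun t => log (1 - t)) 0) y := by
    rcases eq_or_ne y 0 with rfl | hy0
    · exact continuousAt_dslope_same.mpr ((differentiableAt_id.const_sub 1).log (by norm_num))
    · exact (continuousAt_dslope_of_ne hy0).mpr hlog
  simp_rw [log_mul_log_one_sub_eq_dslope]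
  exact (continuous_mul_log.continuousAt.mul hdslope).continuousWithinAt

lemma continuous_log_mul_log_one_sub : Continuous fun y : ℝ => log y * log (1 - y) := by
  refine continuous_iff_continuousAt.mpr fun y => ?_
  rcases lt_or_ge y 1 with hy | hy
  · exact continuousOn_log_mul_log_one_sub.continuousAt (Iio_mem_nhds hy)
  · have h := (continuousOn_log_mul_log_one_sub.continuousAt
      (Iio_mem_nhds (by linarith : 1 - y < 1))).comp (continuousAt_const.sub continuousAt_id)
    simpa [Function.comp_def, mul_comm] using h

lemma hasDerivAt_Li2_add_Li2_one_sub {x : ℝ} (hx : x ∈ Ioo 0 1) :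
    HasDerivAt (fun y => Li2 y + Li2 (1 - y) + log y * log (1 - y)) 0 x := by
  obtain ⟨hx0, hx1⟩ := hx
  have h1x : 0 < 1 - x := by linarith
  have hLi2 := hasDerivAt_Li2 hx0.ne' (abs_lt.mpr ⟨by linarith, hx1⟩)
  have hLi2' := (hasDerivAt_Li2 h1x.ne' (abs_lt.mpr ⟨by linarith, by linarith⟩)).comp x
    ((hasDerivAt_id x).const_sub 1)
  have hlog := (hasDerivAt_log hx0.ne').mul
    ((hasDerivAt_log h1x.ne').comp x ((hasDerivAt_id x).const_sub 1))
  refine ((hLi2.add hLi2').add hlog).congr_deriv ?_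
  simp only [Function.comp_apply, sub_sub_cancel]
  field_simp
  ring

-- With `log 0 = 0` this holds at `x = 0` too, where it reads `Li₂ 0 + Li₂ 1 = π²/6`.
lemma Li2_add_Li2_one_sub {x : ℝ} (hx : x ∈ Icc 0 1) :
    Li2 x + Li2 (1 - x) + log x * log (1 - x) = π ^ 2 / 6 := by
  have hcont : ContinuousOn (fun y => Li2 y + Li2 (1 - y) + log y * log (1 - y)) (Icc 0 x) := by
    refine ((continuousOn_Li2.mono ?_).add (continuousOn_Li2.comp (by fun_prop) ?_)).add
      continuous_log_mul_log_one_sub.continuousOn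
    · exact Icc_subset_Icc (by norm_num) hx.2
    · intro y hy
      constructor <;> linarith [hy.1, hy.2, hx.2]
  have h := intervalIntegral.integral_eq_sub_of_hasDerivAt_of_le hx.1 hcont
    (fun y hy => hasDerivAt_Li2_add_Li2_one_sub ⟨hy.1, hy.2.trans_le hx.2⟩)
    intervalIntegrable_const
  simp only [intervalIntegral.integral_const, smul_zero, sub_zero, log_zero, zero_mul, add_zero,
    Li2_zero, Li2_one] at h
  linarith

lemma Li2_one_sub_exp_neg {c : ℝ} (hc : 0 ≤ c) :
    Li2 (1 - exp (-c)) = π ^ 2 / 6 - Li2 (exp (-c)) + c * log (1 - exp (-c)) := by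
  have h := Li2_add_Li2_one_sub ⟨(exp_pos (-c)).le, exp_le_one_iff.mpr (neg_nonpos.mpr hc)⟩
  rw [log_exp] at h
  linarith

lemma hasDerivAt_Li2_one_sub_exp_neg {y : ℝ} (hy : 0 < y) :
    HasDerivAt (fun t => Li2 (1 - exp (-t))) (y / (exp y - 1)) y := by
  have hlt : exp (-y) < 1 := exp_lt_one_iff.mpr (neg_lt_zero.mpr hy)
  have hLi2 := hasDerivAt_Li2 (x := 1 - exp (-y)) (by linarith)
    (abs_lt.mpr ⟨by linarith [exp_pos (-y)], by linarith [exp_pos (-y)]⟩)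
  have hinner : HasDerivAt (fun t => 1 - exp (-t)) (exp (-y)) y := by
    simpa using (hasDerivAt_neg y).exp.const_sub 1
  refine (hLi2.comp y hinner).congr_deriv ?_
  have hey : exp y - 1 ≠ 0 := (sub_pos.mpr (one_lt_exp_iff.mpr hy)).ne'
  rw [sub_sub_cancel, log_exp, exp_neg]
  field_simp

lemma continuousOn_Li2_one_sub_exp_neg : ContinuousOn (fun t => Li2 (1 - exp (-t))) (Ici 0) :=
  continuousOn_Li2.comp (by fun_prop) fun t ht =>
    ⟨by linarith [exp_le_one_iff.mpr (neg_nonpos.mpr ht)], by linarith [exp_pos (-t)]⟩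

lemma div_exp_sub_one_nonneg {x : ℝ} (hx : 0 ≤ x) : 0 ≤ x / (exp x - 1) :=
  div_nonneg hx (sub_nonneg.mpr (one_le_exp hx))

lemma antitoneOn_div_exp_sub_one : AntitoneOn (fun x => x / (exp x - 1)) (Ioi 0) := by
  intro x hx y hy hxy
  -- the chord slopes `(exp x - 1) / x` of the convex function `exp` from `0` increase
  have hslope := convexOn_exp.secant_mono (a := 0) (mem_univ _) (mem_univ _) (mem_univ _)
    (ne_of_gt hx) (ne_of_gt hy) hxy
  simp only [exp_zero, sub_zero] at hslope
  have hpos : 0 < (exp x - 1) / x := div_pos (sub_pos.mpr (one_lt_exp_iff.mpr hx)) hx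
  simpa only [one_div_div] using one_div_le_one_div_of_le hpos hslope

lemma intervalIntegrable_div_exp_sub_one {a b : ℝ} (ha : 0 ≤ a) (hab : a ≤ b) :
    IntervalIntegrable (fun x => x / (exp x - 1)) volume a b :=
  (intervalIntegrable_iff_integrableOn_Ioc_of_le hab).mpr <|
    intervalIntegral.integrableOn_deriv_of_nonneg
      (continuousOn_Li2_one_sub_exp_neg.mono fun _ ht => ha.trans ht.1)
      (fun _ hx => hasDerivAt_Li2_one_sub_exp_neg (ha.trans_lt hx.1))
      (fun _ hx => div_exp_sub_one_nonneg (ha.trans hx.1.le))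

lemma integral_div_exp_sub_one {a b : ℝ} (ha : 0 ≤ a) (hab : a ≤ b) :
    ∫ x in a..b, x / (exp x - 1) = Li2 (1 - exp (-b)) - Li2 (1 - exp (-a)) :=
  intervalIntegral.integral_eq_sub_of_hasDerivAt_of_le hab
    (continuousOn_Li2_one_sub_exp_neg.mono fun _ ht => ha.trans ht.1)
    (fun _ hx => hasDerivAt_Li2_one_sub_exp_neg (ha.trans_lt hx.1))
    (intervalIntegrable_div_exp_sub_one ha hab)

lemma integral_div_exp_sub_one_add_le {c₁ c₂ : ℝ} (hc₁ : 0 ≤ c₁) (hc₂ : 0 ≤ c₂) :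
    ∫ x in c₂..c₁ + c₂, x / (exp x - 1) ≤ ∫ x in 0..c₁, x / (exp x - 1) := by
  have hcomp := intervalIntegral.integral_comp_add_right (a := 0) (b := c₁)
    (fun x => x / (exp x - 1)) c₂
  rw [zero_add] at hcomp
  rw [← hcomp]
  have hshift : IntervalIntegrable (fun x => (x + c₂) / (exp (x + c₂) - 1)) volume 0 c₁ := by
    simpa using
      (intervalIntegrable_div_exp_sub_one hc₂ (le_add_of_nonneg_left hc₁)).comp_add_right c₂
  refine intervalIntegral.integral_mono_on_of_le_Ioo hc₁ hshift
    (intervalIntegrable_div_exp_sub_one le_rfl hc₁) fun x hx => ?_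
  exact antitoneOn_div_exp_sub_one hx.1 (mem_Ioi.mpr (by linarith [hx.1]))
    (le_add_of_nonneg_right hc₂)

theorem A_sq_identities (c₁ c₂ : ℝ) (hc₁ : 0 < c₁) (hc₂ : 0 < c₂) :
    A c₁ c₂ ^ 2 = Li2 (1 - Real.exp (-c₁)) + Li2 (1 - Real.exp (-c₂))
        - Li2 (1 - Real.exp (-(c₁ + c₂))) ∧
    A c₁ c₂ ^ 2 = π ^ 2 / 6 + Li2 (Real.exp (-(c₁ + c₂)))
        - Li2 (Real.exp (-c₁)) - Li2 (Real.exp (-c₂))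
        - (c₁ + c₂) * Real.log (1 - Real.exp (-(c₁ + c₂)))
        + c₁ * Real.log (1 - Real.exp (-c₁)) + c₂ * Real.log (1 - Real.exp (-c₂)) := by
  have hsq : A c₁ c₂ ^ 2 = Li2 (1 - exp (-c₁)) + Li2 (1 - exp (-c₂))
      - Li2 (1 - exp (-(c₁ + c₂))) := by
    rw [A, sq_sqrt (sub_nonneg.mpr (integral_div_exp_sub_one_add_le hc₁.le hc₂.le)),
      integral_div_exp_sub_one le_rfl hc₁.le,
      integral_div_exp_sub_one hc₂.le (le_add_of_nonneg_left hc₁.le)]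
    simp only [neg_zero, exp_zero, sub_self, Li2_zero]
    ring
  refine ⟨hsq, ?_⟩
  rw [hsq, Li2_one_sub_exp_neg hc₁.le, Li2_one_sub_exp_neg hc₂.le,
    Li2_one_sub_exp_neg (add_pos hc₁ hc₂).le]
  ring
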